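/- If G is a connected subcubic graph with minimum degree 2 and P = u_1 v_1 u_2 v_2 ... u_k v_k u_{k+1} is a path in G where each v_i has degree 2 in G, and M' is a uniquely restricted matching in G - V(P), then M' ∪ {u_1v_1, u_2v_2, ..., u_kv_k} is a uniquely restricted matching in G. -/

import Mathlib

open SimpleGraph

/-! Every `w i` has degree 2, so a matching `N` covering the same vertices as
`M' ∪ {u_i w_i}` matches `w i` either to `u i` or to `u (i + 1)`. The end `u k` of the path is
not covered, so going down the path, `N` is forced to contain every edge `u_i w_i`. The rest
of `N` is then a matching of `G - V(P)` covering the vertices of `M'`, hence equal to `M'`. -/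

def IsMatchingSet {V : Type*} (G : SimpleGraph V) (M : Set (Sym2 V)) : Prop :=
  M ⊆ G.edgeSet ∧ M.Pairwise fun e f => ∀ v : V, v ∈ e → v ∉ f

def coveredVerts {V : Type*} (M : Set (Sym2 V)) : Set V := {v | ∃ e ∈ M, v ∈ e}

def IsURMatching {V : Type*} (G : SimpleGraph V) (M : Set (Sym2 V)) : Prop :=
  IsMatchingSet G M ∧
    ∀ N : Set (Sym2 V), IsMatchingSet G N → coveredVerts N = coveredVerts M → N = M

def IsAltCycle {V : Type*} (G : SimpleGraph V) (M : Set (Sym2 V)) {v : V}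
    (c : G.Walk v v) : Prop :=
  c.IsCycle ∧ List.Chain' (fun e f => (e ∈ M) ↔ ¬ (f ∈ M)) c.edges ∧
    ∀ e f : Sym2 V, c.edges.head? = some e → c.edges.getLast? = some f →
      ((f ∈ M) ↔ ¬ (e ∈ M))

/-- The graph obtained from `G` by deleting the vertices in `S`
(they remain as isolated vertices). -/
def delVerts {V : Type*} (G : SimpleGraph V) (S : Set V) : SimpleGraph V where
  Adj x y := G.Adj x y ∧ x ∉ S ∧ y ∉ S
  symm := ⟨by rintro x y ⟨h, hx, hy⟩; exact ⟨h.symm, hy, hx⟩⟩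
  loopless := ⟨by rintro x ⟨h, -, -⟩; exact G.irrefl h⟩

noncomputable def nuUR {V : Type*} (G : SimpleGraph V) : ℕ :=
  sSup {k | ∃ M : Set (Sym2 V), IsURMatching G M ∧ M.ncard = k}

noncomputable def nuM {V : Type*} (G : SimpleGraph V) : ℕ :=
  sSup {k | ∃ M : Set (Sym2 V), IsMatchingSet G M ∧ M.ncard = k}

def IsGoodBridge {V : Type*} [Fintype V] (G : SimpleGraph V) [DecidableRel G.Adj]
    (e : Sym2 V) : Prop :=
  G.IsBridge e ∧ ∃ (x y : V) (p : G.Walk x y),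
    p.IsPath ∧ G.degree x ≤ 2 ∧ G.degree y ≤ 2 ∧ e ∈ p.edges

section

variable {V : Type*}

namespace IsMatchingSet

variable {G H : SimpleGraph V} {M N : Set (Sym2 V)}

theorem eq_of_mem_of_mem (hM : IsMatchingSet G M) {e f : Sym2 V} (he : e ∈ M) (hf : f ∈ M)
    {v : V} (hve : v ∈ e) (hvf : v ∈ f) : e = f :=
  by_contra fun hne => hM.2 he hf hne v hve hvf

theorem mono (h : G ≤ H) (hM : IsMatchingSet G M) : IsMatchingSet H M :=
  ⟨hM.1.trans (edgeSet_mono h), hM.2⟩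

theorem union (hM : IsMatchingSet G M) (hN : IsMatchingSet G N)
    (hdisj : Disjoint (coveredVerts M) (coveredVerts N)) : IsMatchingSet G (M ∪ N) := by
  refine ⟨Set.union_subset hM.1 hN.1, ?_⟩
  rintro e (he | he) f (hf | hf) hef v hve hvf
  · exact hM.2 he hf hef v hve hvf
  · exact Set.disjoint_left.mp hdisj ⟨e, he, hve⟩ ⟨f, hf, hvf⟩
  · exact Set.disjoint_left.mp hdisj ⟨f, hf, hvf⟩ ⟨e, he, hve⟩
  · exact hN.2 he hf hef v hve hvf

end IsMatchingSet

theorem coveredVerts_union (M N : Set (Sym2 V)) :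
    coveredVerts (M ∪ N) = coveredVerts M ∪ coveredVerts N := by
  ext v
  simp [coveredVerts, or_and_right, exists_or]

section delVerts

theorem delVerts_le (G : SimpleGraph V) (S : Set V) : delVerts G S ≤ G := fun _ _ h => h.1

variable {G : SimpleGraph V} {S : Set V}

theorem mem_edgeSet_delVerts {e : Sym2 V} :
    e ∈ (delVerts G S).edgeSet ↔ e ∈ G.edgeSet ∧ ∀ v ∈ e, v ∉ S :=
  Sym2.ind (fun a b => by simp [delVerts]) e

theorem disjoint_coveredVerts_of_subset_delVerts {M : Set (Sym2 V)}
    (hM : M ⊆ (delVerts G S).edgeSet) : Disjoint (coveredVerts M) S :=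
  Set.disjoint_left.mpr fun _ ⟨_, he, hv⟩ => (mem_edgeSet_delVerts.mp (hM he)).2 _ hv

end delVerts

theorem IsURMatching.union_of_forced {G : SimpleGraph V} {S : Set V} {M P : Set (Sym2 V)}
    (hM : IsURMatching (delVerts G S) M) (hP : IsMatchingSet G P) (hPS : coveredVerts P ⊆ S)
    (hforced : ∀ N, IsMatchingSet G N → coveredVerts N = coveredVerts (M ∪ P) → P ⊆ N) :
    IsURMatching G (M ∪ P) := by
  have hMS : Disjoint (coveredVerts M) S := disjoint_coveredVerts_of_subset_delVerts hM.1.1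
  refine ⟨(hM.1.mono (delVerts_le G S)).union hP (hMS.mono_right hPS), fun N hN hcov => ?_⟩
  have hPN : P ⊆ N := hforced N hN hcov
  have hcovR : ∀ e ∈ N \ P, ∀ v ∈ e, v ∈ coveredVerts M := by
    rintro e ⟨heN, heP⟩ v hv
    have hvMP : v ∈ coveredVerts M ∪ coveredVerts P := coveredVerts_union M P ▸ hcov ▸ ⟨e, heN, hv⟩
    refine hvMP.resolve_right ?_
    rintro ⟨f, hfP, hvf⟩
    exact heP (hN.eq_of_mem_of_mem heN (hPN hfP) hv hvf ▸ hfP)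
  have hR : IsMatchingSet (delVerts G S) (N \ P) :=
    ⟨fun e he => mem_edgeSet_delVerts.mpr
      ⟨hN.1 he.1, fun v hv => Set.disjoint_left.mp hMS (hcovR e he v hv)⟩,
      hN.2.mono Set.sdiff_subset⟩
  have hRcov : coveredVerts (N \ P) = coveredVerts M := by
    refine subset_antisymm (fun v ⟨e, he, hv⟩ => hcovR e he v hv) fun v hv => ?_
    obtain ⟨e, heN, hve⟩ : v ∈ coveredVerts N := hcov ▸ coveredVerts_union M P ▸ Or.inl hv
    exact ⟨e, ⟨heN, fun heP => Set.disjoint_left.mp hMS hv (hPS ⟨e, heP, hve⟩)⟩, hve⟩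
  rw [← Set.sdiff_union_of_subset hPN, hM.2 _ hR hRcov]

theorem SimpleGraph.eq_or_eq_of_adj_of_degree_eq_two {G : SimpleGraph V} {v a b x : V}
    [Fintype (G.neighborSet v)] (hdeg : G.degree v = 2) (ha : G.Adj v a) (hb : G.Adj v b)
    (hab : a ≠ b) (hx : G.Adj v x) : x = a ∨ x = b := by
  classical
  have hnbr : ({a, b} : Finset V) = G.neighborFinset v := by
    refine Finset.eq_of_subset_of_card_le (fun y hy => ?_) ?_
    · rcases Finset.mem_insert.mp hy with rfl | hy
      · exact (G.mem_neighborFinset _ _).mpr ha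
      · exact (Finset.mem_singleton.mp hy) ▸ (G.mem_neighborFinset _ _).mpr hb
    · rw [Finset.card_pair hab, card_neighborFinset_eq_degree, hdeg]
  simpa [← hnbr] using (G.mem_neighborFinset v x).mpr hx

section AlternatingPath

variable {k : ℕ} {u : Fin (k + 1) → V} {w : Fin k → V}

/-- The matching `{u i w i | i < k}` of the path `u 0, w 0, u 1, …, w (k - 1), u k`. -/
def pathMatching (u : Fin (k + 1) → V) (w : Fin k → V) : Set (Sym2 V) :=
  {e | ∃ i : Fin k, e = s(u i.castSucc, w i)}

theorem coveredVerts_pathMatching (u : Fin (k + 1) → V) (w : Fin k → V) :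
    coveredVerts (pathMatching u w) = Set.range (u ∘ Fin.castSucc) ∪ Set.range w := by
  ext v
  simp [coveredVerts, pathMatching, eq_comm, exists_or]

theorem isMatchingSet_pathMatching {G : SimpleGraph V} (hinj : Function.Injective (Sum.elim u w))
    (hadj : ∀ i, G.Adj (u i.castSucc) (w i)) : IsMatchingSet G (pathMatching u w) := by
  obtain ⟨hu, hw, huw⟩ := Sum.elim_injective.mp hinj
  refine ⟨fun e ⟨i, he⟩ => he ▸ hadj i, ?_⟩
  rintro _ ⟨i, rfl⟩ _ ⟨j, rfl⟩ hne v hvi hvj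
  have hij : i ≠ j := fun h => hne (h ▸ rfl)
  rw [Sym2.mem_iff] at hvi hvj
  rcases hvi with rfl | rfl <;> rcases hvj with h | h
  · exact hij (Fin.castSucc_injective k (hu h))
  · exact huw _ _ h
  · exact huw _ _ h.symm
  · exact hij (hw h)

theorem pathMatching_subset {G : SimpleGraph V} {N : Set (Sym2 V)} (hN : IsMatchingSet G N)
    (hw : Function.Injective w)
    (hnbr : ∀ i x, G.Adj (w i) x → x = u i.castSucc ∨ x = u i.succ)
    (hwN : ∀ i, w i ∈ coveredVerts N) (hlast : u (Fin.last k) ∉ coveredVerts N) :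
    pathMatching u w ⊆ N := by
  have hedge : ∀ i, s(u i.castSucc, w i) ∈ N ∨ s(w i, u i.succ) ∈ N := by
    intro i
    obtain ⟨e, heN, hwe⟩ := hwN i
    obtain ⟨x, rfl⟩ := Sym2.mem_iff_exists.mp hwe
    rcases hnbr i x (hN.1 heN) with rfl | rfl
    · exact Or.inl (Sym2.eq_swap ▸ heN)
    · exact Or.inr heN
  have hright : ∀ j : Fin (k + 1), ∀ i : Fin k, i.succ = j → s(w i, u j) ∉ N := by
    intro j
    induction j using Fin.reverseInduction with
    | last => exact fun i _ hiN => hlast ⟨_, hiN, Sym2.mem_mk_right _ _⟩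
    | cast j ih =>
      intro i hij hiN
      have hjN : s(u j.castSucc, w j) ∈ N := (hedge j).resolve_right (ih j rfl)
      have hne : i ≠ j := fun h => Fin.castSucc_lt_succ.ne' (h ▸ hij)
      have heq := hN.eq_of_mem_of_mem hiN hjN (Sym2.mem_mk_right _ _) (Sym2.mem_mk_left _ _)
      rw [Sym2.eq_swap, Sym2.congr_right] at heq
      exact hne (hw heq)
  rintro _ ⟨i, rfl⟩
  exact (hedge i).resolve_right (hright i.succ i rfl)

end AlternatingPath

end

theorem stmt11_general {V : Type*} [Fintype V] (G : SimpleGraph V) [DecidableRel G.Adj]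
    (k : ℕ) (u : Fin (k + 1) → V) (w : Fin k → V)
    (hinj : Function.Injective (Sum.elim u w))
    (hadj1 : ∀ i : Fin k, G.Adj (u i.castSucc) (w i))
    (hadj2 : ∀ i : Fin k, G.Adj (w i) (u i.succ))
    (hdeg : ∀ i : Fin k, G.degree (w i) = 2)
    (M' : Set (Sym2 V))
    (hM' : IsURMatching (delVerts G (Set.range u ∪ Set.range w)) M') :
    IsURMatching G (M' ∪ {e | ∃ i : Fin k, e = s(u i.castSucc, w i)}) := by
  change IsURMatching G (M' ∪ pathMatching u w)
  obtain ⟨hu, hw, huw⟩ := Sum.elim_injective.mp hinj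
  have hnbr : ∀ i x, G.Adj (w i) x → x = u i.castSucc ∨ x = u i.succ := fun i _ =>
    eq_or_eq_of_adj_of_degree_eq_two (hdeg i) (hadj1 i).symm (hadj2 i)
      (hu.ne Fin.castSucc_lt_succ.ne)
  have hcovP := coveredVerts_pathMatching u w
  refine hM'.union_of_forced (isMatchingSet_pathMatching hinj hadj1)
    (hcovP ▸ Set.union_subset_union_left _ (Set.range_comp_subset_range _ _))
    fun N hN hcov => pathMatching_subset hN hw hnbr (fun i => ?_) ?_
  all_goals rw [hcov, coveredVerts_union, hcovP]
  · exact Or.inr (Or.inr ⟨i, rfl⟩)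
  · rintro (hM'last | ⟨i, hi⟩ | ⟨i, hi⟩)
    · exact Set.disjoint_left.mp (disjoint_coveredVerts_of_subset_delVerts hM'.1.1) hM'last
        (Or.inl ⟨_, rfl⟩)
    · exact Fin.castSucc_ne_last i (hu hi)
    · exact huw _ _ hi.symm

/-- If `G` is subcubic with minimum degree `2`, `P = u_1 v_1 ... u_k v_k u_{k+1}` is a
path whose internal vertices `v_i` all have degree `2` in `G`, and `M'` is a uniquely
restricted matching in `G - V(P)`, then `M' ∪ {u_1v_1, ..., u_kv_k}` is a uniquely
restricted matching in `G`. -/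
theorem stmt11 {V : Type*} [Fintype V] (G : SimpleGraph V) [DecidableRel G.Adj]
    (hsub : ∀ x : V, G.degree x ≤ 3) (hmin : ∀ x : V, 2 ≤ G.degree x)
    (k : ℕ) (u : Fin (k + 1) → V) (w : Fin k → V)
    (hinj : Function.Injective (Sum.elim u w))
    (hadj1 : ∀ i : Fin k, G.Adj (u i.castSucc) (w i))
    (hadj2 : ∀ i : Fin k, G.Adj (w i) (u i.succ))
    (hdeg : ∀ i : Fin k, G.degree (w i) = 2)
    (M' : Set (Sym2 V))
    (hM' : IsURMatching (delVerts G (Set.range u ∪ Set.range w)) M') :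
    IsURMatching G (M' ∪ {e | ∃ i : Fin k, e = s(u i.castSucc, w i)}) :=
  stmt11_general G k u w hinj hadj1 hadj2 hdeg M' hM'
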